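/- Let Ω ⊆ ℝⁿ be open, and let ψ : Ω → ℝ^{n+2}, τ : Ω → ℝ, ν : Ω → ℝ^{n+2} be C² with |ψ| = 1, |ν| = 1, ⟨ψ, ν⟩₀ = 0, and ⟨Dψ(x)X, ν(x)⟩₀ = Dτ(x)X for all X. Set φ̄ := (ψ, τ), φ := cos(τ)ψ − sin(τ)ν, ν_φ := sin(τ)ψ + cos(τ)ν, and assume Dφ(x) is injective at a fixed x ∈ Ω. Let A : ℝⁿ → ℝⁿ be the linear map with Dν_φ(x)X = −Dφ(x)(AX), and set g(X, Y) := ⟨Dφ(x)X, Dφ(x)Y⟩₀. Then for all X, Y ∈ ℝⁿ: (i) η(Dφ̄(x)X, Dφ̄(x)Y) = cos²(τ) g(X, Y) − 2 sin(τ)cos(τ) g(AX, Y) + sin²(τ) g(AX, AY); (ii) the second fundamental form with respect to ν̄ = (ν, 1), namely h̄_ν̄(X, Y) = −η(Dφ̄(x)X, (Dν(x)Y, 0)), equals (cos²(τ) − sin²(τ)) g(AX, Y) + sin(τ)cos(τ)(g(X, Y) − g(AX, AY)). -/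

import Mathlib

open scoped RealInnerProductSpace BigOperators

noncomputable section

/-- Euclidean space `ℝ^n`. -/
abbrev E (n : ℕ) := EuclideanSpace ℝ (Fin n)

/-- The Lorentzian form on `ℝ^{n+3} = ℝ^{n+2} × ℝ`: `η((u,s),(v,t)) = ⟨u,v⟩₀ − s·t`;
this is the metric of `S^{n+1} × ℝ`. -/
def etaS (n : ℕ) (u v : E (n + 2) × ℝ) : ℝ := ⟪u.1, v.1⟫ - u.2 * v.2

set_option maxHeartbeats 1000000 in
/-- Let `ψ, τ, ν` be `C²` on an open `Ω ⊆ ℝⁿ` with `|ψ| = 1`, `|ν| = 1`, `⟨ψ,ν⟩₀ = 0` and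
`⟨Dψ X, ν⟩₀ = Dτ X`. Set `φ̄ := (ψ, τ)`, `φ := cos(τ)ψ − sin(τ)ν`, `ν_φ := sin(τ)ψ + cos(τ)ν`,
fix `x ∈ Ω` with `Dφ(x)` injective, let `A` be the shape operator (`Dν_φ(x)X = −Dφ(x)(AX)`)
and `g(X,Y) := ⟨Dφ(x)X, Dφ(x)Y⟩₀`. Then
(i) `η(Dφ̄ X, Dφ̄ Y) = cos²τ g(X,Y) − 2 sinτ cosτ g(AX,Y) + sin²τ g(AX,AY)`;
(ii) `h̄_ν̄(X,Y) = −η(Dφ̄(x)X, (Dν(x)Y, 0))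
      = (cos²τ − sin²τ) g(AX,Y) + sinτ cosτ (g(X,Y) − g(AX,AY))`. -/
theorem statement16 (n : ℕ) (Ω : Set (E n)) (hΩ : IsOpen Ω)
    (ψ : E n → E (n + 2)) (τ : E n → ℝ) (ν : E n → E (n + 2))
    (hψ : ContDiffOn ℝ 2 ψ Ω) (hτ : ContDiffOn ℝ 2 τ Ω) (hν : ContDiffOn ℝ 2 ν Ω)
    (hψunit : ∀ y ∈ Ω, ‖ψ y‖ = 1)
    (hνunit : ∀ y ∈ Ω, ‖ν y‖ = 1)
    (hψν : ∀ y ∈ Ω, ⟪ψ y, ν y⟫ = 0)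
    (hnormal : ∀ y ∈ Ω, ∀ X : E n, ⟪fderiv ℝ ψ y X, ν y⟫ = fderiv ℝ τ y X)
    (x : E n) (hx : x ∈ Ω)
    (φ : E n → E (n + 2))
    (hφdef : φ = fun y => Real.cos (τ y) • ψ y - Real.sin (τ y) • ν y)
    (νφ : E n → E (n + 2))
    (hνφdef : νφ = fun y => Real.sin (τ y) • ψ y + Real.cos (τ y) • ν y)
    (hInj : Function.Injective (fderiv ℝ φ x))
    (A : E n →ₗ[ℝ] E n)
    (hA : ∀ X : E n, fderiv ℝ νφ x X = - fderiv ℝ φ x (A X))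
    (g : E n → E n → ℝ)
    (hg : ∀ X Y : E n, g X Y = ⟪fderiv ℝ φ x X, fderiv ℝ φ x Y⟫)
    (φbar : E n → E (n + 2) × ℝ)
    (hφbar : φbar = fun y => (ψ y, τ y)) :
    (∀ X Y : E n,
      etaS n (fderiv ℝ φbar x X) (fderiv ℝ φbar x Y)
        = Real.cos (τ x) ^ 2 * g X Y
          - 2 * Real.sin (τ x) * Real.cos (τ x) * g (A X) Y
          + Real.sin (τ x) ^ 2 * g (A X) (A Y)) ∧
    (∀ X Y : E n,
      - etaS n (fderiv ℝ φbar x X) (fderiv ℝ ν x Y, (0 : ℝ))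
        = (Real.cos (τ x) ^ 2 - Real.sin (τ x) ^ 2) * g (A X) Y
          + Real.sin (τ x) * Real.cos (τ x) * (g X Y - g (A X) (A Y))) := by
  have hΩx : Ω ∈ nhds x := hΩ.mem_nhds hx
  have hψ2 : ContDiffAt ℝ 2 ψ x := hψ.contDiffAt hΩx
  have hτ2 : ContDiffAt ℝ 2 τ x := hτ.contDiffAt hΩx
  have hν2 : ContDiffAt ℝ 2 ν x := hν.contDiffAt hΩx
  have hψ' : HasFDerivAt ψ (fderiv ℝ ψ x) x :=
    (hψ2.differentiableAt (by norm_num)).hasFDerivAt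
  have hτ' : HasFDerivAt τ (fderiv ℝ τ x) x :=
    (hτ2.differentiableAt (by norm_num)).hasFDerivAt
  have hν' : HasFDerivAt ν (fderiv ℝ ν x) x :=
    (hν2.differentiableAt (by norm_num)).hasFDerivAt
  set Pψ := fderiv ℝ ψ x with hPψdef
  set Pτ := fderiv ℝ τ x with hPτdef
  set Pν := fderiv ℝ ν x with hPνdef
  set s := Real.sin (τ x) with hsdef
  set c := Real.cos (τ x) with hcdef
  -- basic pointwise identities
  have ipψψ : ⟪ψ x, ψ x⟫ = 1 := by
    rw [real_inner_self_eq_norm_sq, hψunit x hx]; norm_num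
  have ipνν : ⟪ν x, ν x⟫ = 1 := by
    rw [real_inner_self_eq_norm_sq, hνunit x hx]; norm_num
  have ipψν : ⟪ψ x, ν x⟫ = 0 := hψν x hx
  have ipνψ : ⟪ν x, ψ x⟫ = 0 := by rw [real_inner_comm]; exact ipψν
  -- ⟪Pψ X, ψ x⟫ = 0
  have hPψψ : ∀ X, ⟪Pψ X, ψ x⟫ = 0 := by
    intro X
    have key := hψ'.inner ℝ hψ'
    have hconst : HasFDerivAt (fun y => ⟪ψ y, ψ y⟫) (0 : E n →L[ℝ] ℝ) x := by
      refine (hasFDerivAt_const (1 : ℝ) x).congr_of_eventuallyEq ?_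
      filter_upwards [hΩx] with y hy
      rw [real_inner_self_eq_norm_sq, hψunit y hy]; norm_num
    have h0 := key.unique hconst
    have h2 := congrArg (fun L : E n →L[ℝ] ℝ => L X) h0
    simp only [ContinuousLinearMap.comp_apply, ContinuousLinearMap.prod_apply,
      fderivInnerCLM_apply, ContinuousLinearMap.zero_apply] at h2
    have := real_inner_comm (ψ x) (Pψ X)
    linarith [h2, this]
  have hPνν : ∀ X, ⟪Pν X, ν x⟫ = 0 := by
    intro X
    have key := hν'.inner ℝ hν'
    have hconst : HasFDerivAt (fun y => ⟪ν y, ν y⟫) (0 : E n →L[ℝ] ℝ) x := by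
      refine (hasFDerivAt_const (1 : ℝ) x).congr_of_eventuallyEq ?_
      filter_upwards [hΩx] with y hy
      rw [real_inner_self_eq_norm_sq, hνunit y hy]; norm_num
    have h0 := key.unique hconst
    have h2 := congrArg (fun L : E n →L[ℝ] ℝ => L X) h0
    simp only [ContinuousLinearMap.comp_apply, ContinuousLinearMap.prod_apply,
      fderivInnerCLM_apply, ContinuousLinearMap.zero_apply] at h2
    have := real_inner_comm (ν x) (Pν X)
    linarith [h2, this]
  have hPψν : ∀ X, ⟪Pψ X, ν x⟫ = Pτ X := fun X => hnormal x hx X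
  have hPνψ : ∀ X, ⟪Pν X, ψ x⟫ = - Pτ X := by
    intro X
    have key := hψ'.inner ℝ hν'
    have hconst : HasFDerivAt (fun y => ⟪ψ y, ν y⟫) (0 : E n →L[ℝ] ℝ) x := by
      refine (hasFDerivAt_const (0 : ℝ) x).congr_of_eventuallyEq ?_
      filter_upwards [hΩx] with y hy
      exact hψν y hy
    have h0 := key.unique hconst
    have h2 := congrArg (fun L : E n →L[ℝ] ℝ => L X) h0
    simp only [ContinuousLinearMap.comp_apply, ContinuousLinearMap.prod_apply,
      fderivInnerCLM_apply, ContinuousLinearMap.zero_apply] at h2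
    have hc1 := real_inner_comm (ψ x) (Pν X)
    have := hPψν X
    linarith [h2]
  have hAψ : ∀ X, ⟪ψ x, Pψ X⟫ = 0 := fun X => by rw [real_inner_comm]; exact hPψψ X
  have hAν : ∀ X, ⟪ν x, Pν X⟫ = 0 := fun X => by rw [real_inner_comm]; exact hPνν X
  have hBν : ∀ X, ⟪ν x, Pψ X⟫ = Pτ X := fun X => by rw [real_inner_comm]; exact hPψν X
  have hBψ : ∀ X, ⟪ψ x, Pν X⟫ = - Pτ X := fun X => by rw [real_inner_comm]; exact hPνψ X
  -- symmetry of the mixed second fundamental form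
  have hb : ∀ X Y : E n, ⟪Pψ X, Pν Y⟫ = ⟪Pν X, Pψ Y⟫ := by
    intro X Y
    have hDψ : DifferentiableAt ℝ (fderiv ℝ ψ) x :=
      (hψ2.fderiv_right (m := 1) (by norm_num)).differentiableAt (by norm_num)
    have hDτ : DifferentiableAt ℝ (fderiv ℝ τ) x :=
      (hτ2.fderiv_right (m := 1) (by norm_num)).differentiableAt (by norm_num)
    have hsymψ := hψ2.isSymmSndFDerivAt (by simp)
    have hsymτ := hτ2.isSymmSndFDerivAt (by simp)
    have key : ∀ Z W : E n,
        ⟪fderiv ℝ (fderiv ℝ ψ) x W Z, ν x⟫ + ⟪Pψ Z, Pν W⟫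
          = fderiv ℝ (fderiv ℝ τ) x W Z := by
      intro Z W
      have h1 : HasFDerivAt (fun y => fderiv ℝ ψ y Z)
          ((fderiv ℝ (fderiv ℝ ψ) x).flip Z) x := by
        have := hDψ.hasFDerivAt.clm_apply (hasFDerivAt_const Z x)
        refine this.congr_fderiv ?_
        ext W'
        simp
      have h2 := h1.inner ℝ hν'
      have h3 : HasFDerivAt (fun y => fderiv ℝ τ y Z)
          ((fderiv ℝ (fderiv ℝ τ) x).flip Z) x := by
        have := hDτ.hasFDerivAt.clm_apply (hasFDerivAt_const Z x)
        refine this.congr_fderiv ?_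
        ext W'
        simp
      have heq : (fun y => ⟪fderiv ℝ ψ y Z, ν y⟫) =ᶠ[nhds x] (fun y => fderiv ℝ τ y Z) := by
        filter_upwards [hΩx] with y hy
        exact hnormal y hy Z
      have h4 : HasFDerivAt (fun y => ⟪fderiv ℝ ψ y Z, ν y⟫)
          ((fderiv ℝ (fderiv ℝ τ) x).flip Z) x := h3.congr_of_eventuallyEq heq
      have h0 := h2.unique h4
      have h5 := congrArg (fun L : E n →L[ℝ] ℝ => L W) h0
      simp only [ContinuousLinearMap.comp_apply, ContinuousLinearMap.prod_apply,
        fderivInnerCLM_apply, ContinuousLinearMap.flip_apply] at h5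
      have hc1 := real_inner_comm (Pψ Z) (Pν W)
      linarith [h5]
    have k1 := key X Y
    have k2 := key Y X
    have e1 : fderiv ℝ (fderiv ℝ ψ) x Y X = fderiv ℝ (fderiv ℝ ψ) x X Y := hsymψ Y X
    have e2 : fderiv ℝ (fderiv ℝ τ) x Y X = fderiv ℝ (fderiv ℝ τ) x X Y := hsymτ Y X
    rw [e1] at k1
    rw [e2] at k1
    have hcomm := real_inner_comm (Pψ Y) (Pν X)
    linarith [k1, k2]
  -- derivatives of φ, νφ, φbar
  have hcos : HasFDerivAt (fun y => Real.cos (τ y)) ((-s) • Pτ) x := by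
    have := (Real.hasDerivAt_cos (τ x)).comp_hasFDerivAt x hτ'
    simpa [hsdef, Function.comp_def] using this
  have hsin : HasFDerivAt (fun y => Real.sin (τ y)) (c • Pτ) x := by
    have := (Real.hasDerivAt_sin (τ x)).comp_hasFDerivAt x hτ'
    simpa [hcdef, Function.comp_def] using this
  have hφ' : HasFDerivAt φ
      ((c • Pψ + ((-s) • Pτ).smulRight (ψ x)) - (s • Pν + (c • Pτ).smulRight (ν x))) x := by
    rw [hφdef]
    exact (hcos.smul hψ').sub (hsin.smul hν')
  have hνφ' : HasFDerivAt νφ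
      ((s • Pψ + (c • Pτ).smulRight (ψ x)) + (c • Pν + ((-s) • Pτ).smulRight (ν x))) x := by
    rw [hνφdef]
    exact (hsin.smul hψ').add (hcos.smul hν')
  have hPφ : ∀ X, fderiv ℝ φ x X
      = c • Pψ X - s • Pν X - (s * Pτ X) • ψ x - (c * Pτ X) • ν x := by
    intro X
    rw [hφ'.fderiv]
    simp only [ContinuousLinearMap.sub_apply, ContinuousLinearMap.add_apply,
      ContinuousLinearMap.smul_apply, ContinuousLinearMap.smulRight_apply,
      ContinuousLinearMap.coe_smul', Pi.smul_apply, smul_eq_mul, neg_mul, neg_smul,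
      ContinuousLinearMap.neg_apply, Pi.neg_apply]
    module
  have hPνφ : ∀ X, fderiv ℝ νφ x X
      = s • Pψ X + c • Pν X + (c * Pτ X) • ψ x - (s * Pτ X) • ν x := by
    intro X
    rw [hνφ'.fderiv]
    simp only [ContinuousLinearMap.sub_apply, ContinuousLinearMap.add_apply,
      ContinuousLinearMap.smul_apply, ContinuousLinearMap.smulRight_apply,
      ContinuousLinearMap.coe_smul', Pi.smul_apply, smul_eq_mul, neg_mul, neg_smul,
      ContinuousLinearMap.neg_apply, Pi.neg_apply]
    module
  have hφbar' : HasFDerivAt φbar (Pψ.prod Pτ) x := by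
    rw [hφbar]; exact HasFDerivAt.prodMk hψ' hτ'
  have hPφbar : ∀ X, fderiv ℝ φbar x X = (Pψ X, Pτ X) := by
    intro X; rw [hφbar'.fderiv]; rfl
  have pyth : s ^ 2 + c ^ 2 = 1 := Real.sin_sq_add_cos_sq (τ x)
  -- scalar formulas for g
  have hgXY : ∀ X Y : E n, g X Y
      = c^2 * ⟪Pψ X, Pψ Y⟫ - c*s*⟪Pψ X, Pν Y⟫ - c*s*⟪Pν X, Pψ Y⟫
        + s^2 * ⟪Pν X, Pν Y⟫ - Pτ X * Pτ Y := by
    intro X Y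
    rw [hg, hPφ, hPφ]
    simp only [inner_sub_left, inner_sub_right, inner_smul_left, inner_smul_right,
      RCLike.ofReal_real_eq_id, id_eq, conj_trivial]
    simp only [hPψψ, hPνν, hPψν, hPνψ, hAψ, hAν, hBν, hBψ, ipψψ, ipνν, ipψν, ipνψ]
    linear_combination (-(Pτ X * Pτ Y)) * pyth
  have hgA : ∀ X Y : E n, g (A X) Y
      = -(s*c*⟪Pψ X, Pψ Y⟫ - s^2*⟪Pψ X, Pν Y⟫ + c^2*⟪Pν X, Pψ Y⟫
          - s*c*⟪Pν X, Pν Y⟫) := by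
    intro X Y
    have hAX : fderiv ℝ φ x (A X) = - fderiv ℝ νφ x X := by rw [hA X]; simp
    rw [hg, hAX, inner_neg_left, hPνφ, hPφ]
    simp only [inner_sub_left, inner_sub_right, inner_add_left, inner_smul_left,
      inner_smul_right, RCLike.ofReal_real_eq_id, id_eq, conj_trivial]
    simp only [hPψψ, hPνν, hPψν, hPνψ, hAψ, hAν, hBν, hBψ, ipψψ, ipνν, ipψν, ipνψ]
    ring
  have hgAA : ∀ X Y : E n, g (A X) (A Y)
      = s^2 * ⟪Pψ X, Pψ Y⟫ + s*c*⟪Pψ X, Pν Y⟫ + s*c*⟪Pν X, Pψ Y⟫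
        + c^2 * ⟪Pν X, Pν Y⟫ - Pτ X * Pτ Y := by
    intro X Y
    have hAX : fderiv ℝ φ x (A X) = - fderiv ℝ νφ x X := by rw [hA X]; simp
    have hAY : fderiv ℝ φ x (A Y) = - fderiv ℝ νφ x Y := by rw [hA Y]; simp
    rw [hg, hAX, hAY, inner_neg_left, inner_neg_right, neg_neg, hPνφ, hPνφ]
    simp only [inner_sub_left, inner_sub_right, inner_add_left, inner_add_right,
      inner_smul_left, inner_smul_right, RCLike.ofReal_real_eq_id, id_eq, conj_trivial]
    simp only [hPψψ, hPνν, hPψν, hPνψ, hAψ, hAν, hBν, hBψ, ipψψ, ipνν, ipψν, ipνψ]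
    linear_combination (-(Pτ X * Pτ Y)) * pyth
  constructor
  · intro X Y
    have heta : etaS n (fderiv ℝ φbar x X) (fderiv ℝ φbar x Y)
        = ⟪Pψ X, Pψ Y⟫ - Pτ X * Pτ Y := by
      rw [hPφbar, hPφbar]; rfl
    rw [heta, hgA, hgAA, hgXY]
    have hbXY := hb X Y
    linear_combination (Pτ X * Pτ Y - (1 + s^2 + c^2) * ⟪Pψ X, Pψ Y⟫) * pyth
      + s * c * (s^2 + c^2) * hbXY
  · intro X Y
    have heta : etaS n (fderiv ℝ φbar x X) (Pν Y, (0:ℝ))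
        = ⟪Pψ X, Pν Y⟫ := by
      rw [hPφbar]; simp [etaS]
    rw [heta, hgA, hgAA, hgXY]
    have hbXY := hb X Y
    linear_combination (⟪Pψ X, Pν Y⟫ * (1 + s^2 + c^2)) * pyth
      - c^2 * (s^2 + c^2) * hbXY
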